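/- arXiv:2409.10268 — 4 statements merged into one kernel-verified Lean document; each statement's English description precedes it below -/
import Mathlib

section
/- Let x, y, z ∈ X with d(y, z) < M, and let Y ⊆ X be a D-contracting subset. Then there exists a constant M̃ depending only on D and M such that |diam(π_Y([x,y])) − diam(π_Y([x,z]))| < M̃, where [x,y] denotes a geodesic and π_Y denotes the nearest-point projection to Y. -/
/-- A parametrized geodesic from `x` to `y`. -/
structure GeodesicFrom {X : Type} [MetricSpace X] (x y : X) where
  toFun : ℝ → X
  source : toFun 0 = x
  target : toFun (dist x y) = y
  isom : ∀ s ∈ Set.Icc (0 : ℝ) (dist x y), ∀ t ∈ Set.Icc (0 : ℝ) (dist x y),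
    dist (toFun s) (toFun t) = |s - t|

/-- The image of a geodesic. -/
def GeodesicFrom.set {X : Type} [MetricSpace X] {x y : X} (γ : GeodesicFrom x y) : Set X :=
  γ.toFun '' Set.Icc 0 (dist x y)

/-- The set of nearest-point projections of `x` to `Y`. -/
def projSet {X : Type} [MetricSpace X] (Y : Set X) (x : X) : Set X :=
  {p ∈ Y | dist x p = Metric.infDist x Y}

/-- The nearest-point projection of a set `S` to `Y`. -/
def projSetOn {X : Type} [MetricSpace X] (Y : Set X) (S : Set X) : Set X :=
  ⋃ x ∈ S, projSet Y x

/-- `Y` is `D`-contracting. -/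
def IsContracting {X : Type} [MetricSpace X] (D : ℝ) (Y : Set X) : Prop :=
  ∀ x y : X, dist x y ≤ Metric.infDist x Y →
    Metric.diam (projSet Y x ∪ projSet Y y) ≤ D

namespace Stmt3Aux

open Metric Set Bornology

variable {X : Type} [MetricSpace X] [ProperSpace X]

lemma projSet_nonempty {Y : Set X} (hYc : IsClosed Y) (hYne : Y.Nonempty) (x : X) :
    (projSet Y x).Nonempty := by
  obtain ⟨y, hy, hdy⟩ := hYc.exists_infDist_eq_dist hYne x
  exact ⟨y, hy, hdy.symm⟩

lemma projSet_bounded (Y : Set X) (x : X) : IsBounded (projSet Y x) := by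
  apply (isBounded_closedBall (x := x) (r := infDist x Y)).subset
  intro p hp
  have : dist p x = infDist x Y := by rw [dist_comm]; exact hp.2
  simp [mem_closedBall, this]

lemma hop_contr {Y : Set X} {D : ℝ} (hC : IsContracting D Y) {w w' p q : X}
    (h : dist w w' ≤ infDist w Y) (hp : p ∈ projSet Y w) (hq : q ∈ projSet Y w') :
    dist p q ≤ D := by
  have hb : IsBounded (projSet Y w ∪ projSet Y w') :=
    (projSet_bounded Y w).union (projSet_bounded Y w')
  exact (dist_le_diam_of_mem hb (Or.inl hp) (Or.inr hq)).trans (hC w w' h)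

lemma hop_contr' {Y : Set X} {D : ℝ} (hC : IsContracting D Y) {w w' p q : X}
    (h : dist w w' ≤ infDist w' Y) (hp : p ∈ projSet Y w) (hq : q ∈ projSet Y w') :
    dist p q ≤ D := by
  have := hop_contr hC (w := w') (w' := w) (by rwa [dist_comm]) hq hp
  rwa [dist_comm]

lemma proj_triangle {Y : Set X} {w w' p q : X}
    (hp : p ∈ projSet Y w) (hq : q ∈ projSet Y w') :
    dist p q ≤ infDist w Y + dist w w' + infDist w' Y := by
  have h4 : dist p q ≤ dist p w + dist w w' + dist w' q := dist_triangle4 p w w' q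
  have h1 : dist p w = infDist w Y := by rw [dist_comm]; exact hp.2
  have h2 : dist w' q = infDist w' Y := hq.2
  linarith

/-- existence of a natural number bound -/
lemma exists_nat_bound {D : ℝ} (hD : 0 < D) (c : ℝ) : ∃ n : ℕ, c ≤ n * D := by
  obtain ⟨n, hn⟩ := exists_nat_ge (c / D)
  exact ⟨n, by rwa [div_le_iff₀ hD] at hn⟩

end Stmt3Aux

namespace Stmt3Aux

open Metric Set Bornology

set_option linter.unusedSectionVars false

variable {X : Type} [MetricSpace X] [ProperSpace X]

section Walk

variable {Y : Set X} {D : ℝ} (hD : 0 < D) (hYc : IsClosed Y) (hYne : Y.Nonempty)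
  (hC : IsContracting D Y) (g : ℝ → X)

include hD hYc hYne hC

/-- If the interval is covered by the two contraction balls at the ends,
projections of the endpoints are `2D`-close. -/
lemma two_ball {σ τ : ℝ} (hστ : σ ≤ τ)
    (hiso : ∀ u ∈ Icc σ τ, ∀ v ∈ Icc σ τ, dist (g u) (g v) = |u - v|)
    (hlen : τ - σ ≤ infDist (g σ) Y + infDist (g τ) Y)
    {p q : X} (hp : p ∈ projSet Y (g σ)) (hq : q ∈ projSet Y (g τ)) :
    dist p q ≤ 2 * D := by
  have hdist : ∀ u v, u ∈ Icc σ τ → v ∈ Icc σ τ → u ≤ v → dist (g u) (g v) = v - u := by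
    intro u v hu hv huv
    rw [hiso u hu v hv, abs_sub_comm, abs_of_nonneg (by linarith)]
  rcases le_or_gt (τ - σ) (infDist (g σ) Y) with h1 | h1
  · have hd : dist (g σ) (g τ) ≤ infDist (g σ) Y := by
      rw [hdist σ τ (left_mem_Icc.2 hστ) (right_mem_Icc.2 hστ) hστ]; exact h1
    have := hop_contr hC hd hp hq
    linarith
  · set m := σ + infDist (g σ) Y with hm
    have h0 : (0:ℝ) ≤ infDist (g σ) Y := infDist_nonneg
    have hmI : m ∈ Icc σ τ := ⟨by linarith, by linarith⟩
    obtain ⟨pm, hpm⟩ := projSet_nonempty hYc hYne (g m)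
    have hop1 : dist p pm ≤ D := by
      apply hop_contr hC ?_ hp hpm
      rw [hdist σ m (left_mem_Icc.2 hστ) hmI (by linarith)]
      linarith
    have hop2 : dist pm q ≤ D := by
      apply hop_contr' hC ?_ hpm hq
      rw [hdist m τ hmI (right_mem_Icc.2 hστ) (by linarith)]
      linarith
    calc dist p q ≤ dist p pm + dist pm q := dist_triangle _ _ _
      _ ≤ 2 * D := by linarith

/-- Four balls version, assuming the interior stays `D`-far from `Y`. -/
lemma four_ball {σ τ : ℝ} (hστ : σ ≤ τ)
    (hiso : ∀ u ∈ Icc σ τ, ∀ v ∈ Icc σ τ, dist (g u) (g v) = |u - v|)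
    (hmid : ∀ r, σ < r → r ≤ τ → D ≤ infDist (g r) Y)
    (hFσ : D ≤ infDist (g σ) Y)
    (hlen : τ - σ ≤ infDist (g σ) Y + infDist (g τ) Y + 2 * D)
    {p q : X} (hp : p ∈ projSet Y (g σ)) (hq : q ∈ projSet Y (g τ)) :
    dist p q ≤ 4 * D := by
  have hdist : ∀ u v, u ∈ Icc σ τ → v ∈ Icc σ τ → u ≤ v → dist (g u) (g v) = v - u := by
    intro u v hu hv huv
    rw [hiso u hu v hv, abs_sub_comm, abs_of_nonneg (by linarith)]
  have hres : ∀ σ' , σ ≤ σ' → σ' ≤ τ →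
      (∀ u ∈ Icc σ' τ, ∀ v ∈ Icc σ' τ, dist (g u) (g v) = |u - v|) := by
    intro σ' h1 h2 u hu v hv
    exact hiso u ⟨le_trans h1 hu.1, hu.2⟩ v ⟨le_trans h1 hv.1, hv.2⟩
  have hFτ : (0:ℝ) ≤ infDist (g τ) Y := infDist_nonneg
  rcases le_or_gt (τ - σ) (infDist (g σ) Y + infDist (g τ) Y) with h1 | h1
  · have := two_ball hD hYc hYne hC g hστ hiso h1 hp hq
    linarith
  · set m := σ + infDist (g σ) Y with hmdef
    have hmσ : σ < m := by have := hFσ; simp [hmdef]; linarith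
    have hmτ : m ≤ τ := by simp [hmdef]; linarith
    have hmI : m ∈ Icc σ τ := ⟨le_of_lt hmσ, hmτ⟩
    obtain ⟨pm, hpm⟩ := projSet_nonempty hYc hYne (g m)
    have hop1 : dist p pm ≤ D := by
      apply hop_contr hC ?_ hp hpm
      rw [hdist σ m (left_mem_Icc.2 hστ) hmI (le_of_lt hmσ)]
      simp [hmdef]
    have hFm : D ≤ infDist (g m) Y := hmid m hmσ hmτ
    rcases le_or_gt (τ - m) (infDist (g m) Y + infDist (g τ) Y) with h2 | h2
    · have := two_ball hD hYc hYne hC g hmτ (hres m (le_of_lt hmσ) hmτ) h2 hpm hq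
      calc dist p q ≤ dist p pm + dist pm q := dist_triangle _ _ _
        _ ≤ 4 * D := by linarith
    · set m' := m + infDist (g m) Y with hm'def
      have hm'm : m < m' := by simp [hm'def]; linarith
      have hm'τ : m' ≤ τ := by simp [hm'def]; linarith
      have hm'I : m' ∈ Icc σ τ := ⟨by linarith [hmI.1], hm'τ⟩
      obtain ⟨pm', hpm'⟩ := projSet_nonempty hYc hYne (g m')
      have hop2 : dist pm pm' ≤ D := by
        apply hop_contr hC ?_ hpm hpm'
        rw [hdist m m' hmI hm'I (le_of_lt hm'm)]
        simp [hm'def]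
      have hFm' : D ≤ infDist (g m') Y := hmid m' (lt_trans hmσ hm'm) hm'τ
      have h3 : τ - m' ≤ infDist (g m') Y + infDist (g τ) Y := by
        have : τ - m' = τ - m - infDist (g m) Y := by simp [hm'def]; ring
        have hτm : τ - m ≤ infDist (g τ) Y + 2 * D := by
          have : τ - σ ≤ infDist (g σ) Y + infDist (g τ) Y + 2 * D := hlen
          simp [hmdef] at *; linarith
        linarith
      have := two_ball hD hYc hYne hC g hm'τ (hres m' (by linarith [hmI.1]) hm'τ) h3 hpm' hq
      calc dist p q ≤ dist p pm + dist pm pm' + dist pm' q := dist_triangle4 _ _ _ _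
        _ ≤ 4 * D := by linarith

/-- Main walk: if the interior of `[σ,τ]` stays `D`-far from `Y` and `F σ ≥ D`,
then projections of the endpoints are `max X 0 + 4D` close, where
`X = (τ-σ) - F σ - F τ`. Induction on `n` with `X ≤ n·D`. -/
lemma walk_main (τ : ℝ) {q : X} (hq : q ∈ projSet Y (g τ)) :
    ∀ n : ℕ, ∀ σ : ℝ, σ ≤ τ →
    (∀ u ∈ Icc σ τ, ∀ v ∈ Icc σ τ, dist (g u) (g v) = |u - v|) →
    (∀ r, σ < r → r ≤ τ → D ≤ infDist (g r) Y) →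
    D ≤ infDist (g σ) Y →
    (τ - σ) - infDist (g σ) Y - infDist (g τ) Y ≤ n * D →
    ∀ p ∈ projSet Y (g σ),
      dist p q ≤ max ((τ - σ) - infDist (g σ) Y - infDist (g τ) Y) 0 + 4 * D := by
  intro n
  induction n with
  | zero =>
    intro σ hστ hiso hmid hFσ hX p hp
    have h2 : τ - σ ≤ infDist (g σ) Y + infDist (g τ) Y + 2 * D := by
      simp at hX; linarith
    have := four_ball hD hYc hYne hC g hστ hiso hmid hFσ h2 hp hq
    have hmax : (0:ℝ) ≤ max ((τ - σ) - infDist (g σ) Y - infDist (g τ) Y) 0 :=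
      le_max_right _ _
    linarith
  | succ n ih =>
    intro σ hστ hiso hmid hFσ hX p hp
    set Fσ := infDist (g σ) Y with hFσdef
    set Fτ := infDist (g τ) Y with hFτdef
    set x := (τ - σ) - Fσ - Fτ with hxdef
    rcases le_or_gt x (2 * D) with hx2 | hx2
    · have h2 : τ - σ ≤ Fσ + Fτ + 2 * D := by simp [hxdef] at hx2 ⊢; linarith
      have := four_ball hD hYc hYne hC g hστ hiso hmid hFσ h2 hp hq
      have hmax : (0:ℝ) ≤ max x 0 := le_max_right _ _
      linarith
    · -- step forward by Fσ
      have hFτ0 : (0:ℝ) ≤ Fτ := infDist_nonneg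
      set σ' := σ + Fσ with hσ'def
      have hσσ' : σ < σ' := by simp [hσ'def]; linarith
      have hσ'τ : σ' ≤ τ := by simp [hσ'def]; linarith
      have hdist : dist (g σ) (g σ') = Fσ := by
        rw [hiso σ (left_mem_Icc.2 hστ) σ' ⟨le_of_lt hσσ', hσ'τ⟩,
          abs_sub_comm, abs_of_nonneg (by simp [hσ'def]; linarith)]
        simp [hσ'def]
      obtain ⟨p', hp'⟩ := projSet_nonempty hYc hYne (g σ')
      have hop : dist p p' ≤ D := hop_contr hC (by rw [hdist]) hp hp'
      have hFσ' : D ≤ infDist (g σ') Y := hmid σ' hσσ' hσ'τ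
      have hiso' : ∀ u ∈ Icc σ' τ, ∀ v ∈ Icc σ' τ, dist (g u) (g v) = |u - v| := by
        intro u hu v hv
        exact hiso u ⟨le_trans (le_of_lt hσσ') hu.1, hu.2⟩ v
          ⟨le_trans (le_of_lt hσσ') hv.1, hv.2⟩
      have hmid' : ∀ r, σ' < r → r ≤ τ → D ≤ infDist (g r) Y := by
        intro r h1 h2; exact hmid r (lt_trans hσσ' h1) h2
      have hmaxx : max x 0 = x := max_eq_left (by linarith)
      rcases le_or_gt (infDist (g σ') Y) x with hcase | hcase
      · -- recurse
        have hX' : (τ - σ') - infDist (g σ') Y - Fτ ≤ n * D := by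
          have : (τ - σ') - infDist (g σ') Y - Fτ = x - infDist (g σ') Y := by
            simp [hσ'def, hxdef]; ring
          rw [this]
          push_cast at hX ⊢
          linarith
        have hrec := ih σ' hσ'τ hiso' hmid' hFσ' hX' p' hp'
        have hmax' : max ((τ - σ') - infDist (g σ') Y - Fτ) 0
            = (τ - σ') - infDist (g σ') Y - Fτ := by
          apply max_eq_left
          have : (τ - σ') - infDist (g σ') Y - Fτ = x - infDist (g σ') Y := by
            simp [hσ'def, hxdef]; ring
          rw [this]; linarith
        rw [hmax'] at hrec
        have hexp : (τ - σ') - infDist (g σ') Y - Fτ = x - infDist (g σ') Y := by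
          simp [hσ'def, hxdef]; ring
        rw [hmaxx]
        calc dist p q ≤ dist p p' + dist p' q := dist_triangle _ _ _
          _ ≤ D + ((τ - σ') - infDist (g σ') Y - Fτ + 4 * D) := by linarith
          _ ≤ x + 4 * D := by rw [hexp]; linarith
      · -- overshoot: two-ball finishes
        have hlen' : τ - σ' ≤ infDist (g σ') Y + Fτ := by
          have : τ - σ' = x + Fτ := by simp [hσ'def, hxdef]; ring
          linarith
        have htb := two_ball hD hYc hYne hC g hσ'τ hiso' hlen' hp' hq
        rw [hmaxx]
        calc dist p q ≤ dist p p' + dist p' q := dist_triangle _ _ _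
          _ ≤ D + 2 * D := by linarith
          _ ≤ x + 4 * D := by linarith

/-- Walk lemma without the condition at the left endpoint. -/
lemma walk_outer {σ τ : ℝ} (hστ : σ ≤ τ)
    (hiso : ∀ u ∈ Icc σ τ, ∀ v ∈ Icc σ τ, dist (g u) (g v) = |u - v|)
    (hmid : ∀ r, σ < r → r ≤ τ → D ≤ infDist (g r) Y)
    {p q : X} (hp : p ∈ projSet Y (g σ)) (hq : q ∈ projSet Y (g τ)) :
    dist p q ≤ max ((τ - σ) - infDist (g σ) Y - infDist (g τ) Y) 0 + 8 * D := by
  set Fσ := infDist (g σ) Y with hFσdef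
  set Fτ := infDist (g τ) Y with hFτdef
  set x := (τ - σ) - Fσ - Fτ with hxdef
  have hmax0 : (0:ℝ) ≤ max x 0 := le_max_right _ _
  rcases le_or_gt D Fσ with hcase | hcase
  · obtain ⟨n, hn⟩ := exists_nat_bound hD x
    have := walk_main hD hYc hYne hC g τ hq n σ hστ hiso hmid hcase hn p hp
    linarith
  · rcases le_or_gt (τ - σ) D with hshort | hshort
    · have hd : dist (g σ) (g τ) = τ - σ := by
        rw [hiso σ (left_mem_Icc.2 hστ) τ (right_mem_Icc.2 hστ), abs_sub_comm,
          abs_of_nonneg (by linarith)]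
      have htri := proj_triangle hp hq
      rw [hd] at htri
      have hLip : Fτ ≤ Fσ + dist (g τ) (g σ) := infDist_le_infDist_add_dist
      rw [dist_comm, hd] at hLip
      linarith
    · set σ₁ := σ + D with hσ₁def
      have h1 : σ < σ₁ := by simp [hσ₁def]; linarith
      have h2 : σ₁ ≤ τ := by simp [hσ₁def]; linarith
      obtain ⟨p₁, hp₁⟩ := projSet_nonempty hYc hYne (g σ₁)
      have hdist : dist (g σ) (g σ₁) = D := by
        rw [hiso σ (left_mem_Icc.2 hστ) σ₁ ⟨le_of_lt h1, h2⟩, abs_sub_comm,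
          abs_of_nonneg (by simp [hσ₁def]; linarith)]
        simp [hσ₁def]
      have hF₁ : D ≤ infDist (g σ₁) Y := hmid σ₁ h1 h2
      have hLip : infDist (g σ₁) Y ≤ Fσ + D := by
        have := infDist_le_infDist_add_dist (x := g σ₁) (y := g σ) (s := Y)
        rw [dist_comm, hdist] at this
        linarith
      have hop : dist p p₁ ≤ Fσ + D + infDist (g σ₁) Y := by
        have := proj_triangle hp hp₁
        rw [hdist] at this
        linarith
      have hiso' : ∀ u ∈ Icc σ₁ τ, ∀ v ∈ Icc σ₁ τ, dist (g u) (g v) = |u - v| := by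
        intro u hu v hv
        exact hiso u ⟨le_trans (le_of_lt h1) hu.1, hu.2⟩ v ⟨le_trans (le_of_lt h1) hv.1, hv.2⟩
      have hmid' : ∀ r, σ₁ < r → r ≤ τ → D ≤ infDist (g r) Y := by
        intro r hr1 hr2; exact hmid r (lt_trans h1 hr1) hr2
      set x₁ := (τ - σ₁) - infDist (g σ₁) Y - Fτ with hx₁def
      obtain ⟨n, hn⟩ := exists_nat_bound hD x₁
      have hw := walk_main hD hYc hYne hC g τ hq n σ₁ h2 hiso' hmid' hF₁ hn p₁ hp₁
      have hx₁x : x₁ ≤ x := by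
        simp [hx₁def, hxdef, hσ₁def]
        have : (0:ℝ) ≤ infDist (g σ₁) Y := infDist_nonneg
        linarith
      have hmaxle : max x₁ 0 ≤ max x 0 := max_le_max hx₁x (le_refl 0)
      calc dist p q ≤ dist p p₁ + dist p₁ q := dist_triangle _ _ _
        _ ≤ (Fσ + D + infDist (g σ₁) Y) + (max x₁ 0 + 4 * D) := by linarith
        _ ≤ max x 0 + 8 * D := by linarith

/-- Core bound: along a geodesic parametrized on `[A,B]`, any two projection points
are within `Δ + 20D` of each other, provided `Δ` dominates `(t-s) - F s - F t`
for all subintervals. -/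
lemma geodesic_proj_bound {A B : ℝ} (hAB : A ≤ B)
    (hiso : ∀ u ∈ Icc A B, ∀ v ∈ Icc A B, dist (g u) (g v) = |u - v|)
    {Δ : ℝ} (hΔ0 : 0 ≤ Δ)
    (hΔ : ∀ s t, A ≤ s → s ≤ t → t ≤ B →
      (t - s) - infDist (g s) Y - infDist (g t) Y ≤ Δ)
    {p q : X} (hp : p ∈ projSet Y (g A)) (hq : q ∈ projSet Y (g B)) :
    dist p q ≤ Δ + 20 * D := by
  classical
  set S : Set ℝ := {r | r ∈ Icc A B ∧ infDist (g r) Y ≤ D} with hSdef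
  rcases S.eq_empty_or_nonempty with hS | hS
  · -- no dip: direct walk
    have hmid : ∀ r, A < r → r ≤ B → D ≤ infDist (g r) Y := by
      intro r h1 h2
      by_contra hcon
      push_neg at hcon
      have : r ∈ S := ⟨⟨le_of_lt h1, h2⟩, le_of_lt hcon⟩
      rw [hS] at this; exact this
    have := walk_outer hD hYc hYne hC g hAB hiso hmid hp hq
    have hXΔ : (B - A) - infDist (g A) Y - infDist (g B) Y ≤ Δ := hΔ A B le_rfl hAB le_rfl
    have : max ((B - A) - infDist (g A) Y - infDist (g B) Y) 0 ≤ Δ := max_le hXΔ hΔ0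
    linarith
  · have hbdd : BddAbove S := BddAbove.mono (fun r hr => hr.1) bddAbove_Icc
    have hbddb : BddBelow S := BddBelow.mono (fun r hr => hr.1) bddBelow_Icc
    set a := sSup S with hadef
    set b := sInf S with hbdef
    have hba : b ≤ a := csInf_le_csSup hS hbddb hbdd
    have hAb : A ≤ b := le_csInf hS (fun r hr => hr.1.1)
    have haB : a ≤ B := csSup_le hS (fun r hr => hr.1.2)
    have haI : a ∈ Icc A B := ⟨le_trans hAb hba, haB⟩
    have hbI : b ∈ Icc A B := ⟨hAb, le_trans hba haB⟩
    -- F a ≤ D and F b ≤ D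
    have hFa : infDist (g a) Y ≤ D := by
      apply le_of_forall_pos_le_add
      intro ε hε
      obtain ⟨r, hrS, hr⟩ := exists_lt_of_lt_csSup hS (by linarith : a - ε < a)
      have hra : r ≤ a := le_csSup hbdd hrS
      have hLip : infDist (g a) Y ≤ infDist (g r) Y + dist (g a) (g r) :=
        infDist_le_infDist_add_dist
      have hd : dist (g a) (g r) = a - r := by
        rw [hiso a haI r hrS.1, abs_of_nonneg (by linarith)]
      rw [hd] at hLip
      have := hrS.2
      linarith
    have hFb : infDist (g b) Y ≤ D := by
      apply le_of_forall_pos_le_add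
      intro ε hε
      obtain ⟨r, hrS, hr⟩ := exists_lt_of_csInf_lt hS (by linarith : b < b + ε)
      have hbr : b ≤ r := csInf_le hbddb hrS
      have hLip : infDist (g b) Y ≤ infDist (g r) Y + dist (g b) (g r) :=
        infDist_le_infDist_add_dist
      have hd : dist (g b) (g r) = r - b := by
        rw [hiso b hbI r hrS.1, abs_sub_comm, abs_of_nonneg (by linarith)]
      rw [hd] at hLip
      have := hrS.2
      linarith
    -- D-far on the right of a and left of b
    have hmidR : ∀ r, a < r → r ≤ B → D ≤ infDist (g r) Y := by
      intro r h1 h2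
      by_contra hcon
      push_neg at hcon
      have hrS : r ∈ S := ⟨⟨le_trans haI.1 (le_of_lt h1), h2⟩, le_of_lt hcon⟩
      have : r ≤ a := le_csSup hbdd hrS
      linarith
    have hmidL : ∀ r, A ≤ r → r < b → D ≤ infDist (g r) Y := by
      intro r h1 h2
      by_contra hcon
      push_neg at hcon
      have hrS : r ∈ S := ⟨⟨h1, le_trans (le_of_lt h2) hbI.2⟩, le_of_lt hcon⟩
      have : b ≤ r := csInf_le hbddb hrS
      linarith
    obtain ⟨pa, hpa⟩ := projSet_nonempty hYc hYne (g a)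
    obtain ⟨pb, hpb⟩ := projSet_nonempty hYc hYne (g b)
    -- piece 1 : [A, b] reversed
    have d1 : dist p pb ≤
        max ((b - A) - infDist (g A) Y - infDist (g b) Y) 0 + 8 * D := by
      set g' : ℝ → X := fun r => g (A + b - r) with hg'def
      have hiso' : ∀ u ∈ Icc A b, ∀ v ∈ Icc A b, dist (g' u) (g' v) = |u - v| := by
        intro u hu v hv
        have hu' : A + b - u ∈ Icc A B := ⟨by linarith [hu.2], by linarith [hu.1, hbI.2]⟩
        have hv' : A + b - v ∈ Icc A B := ⟨by linarith [hv.2], by linarith [hv.1, hbI.2]⟩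
        show dist (g (A + b - u)) (g (A + b - v)) = |u - v|
        rw [hiso _ hu' _ hv']
        rw [show (A + b - u) - (A + b - v) = v - u by ring, abs_sub_comm]
      have hmid' : ∀ r, A < r → r ≤ b → D ≤ infDist (g' r) Y := by
        intro r h1 h2
        show D ≤ infDist (g (A + b - r)) Y
        exact hmidL (A + b - r) (by linarith) (by linarith)
      have hgA : g' A = g b := by show g (A + b - A) = g b; norm_num
      have hgb : g' b = g A := by show g (A + b - b) = g A; norm_num
      have hp1 : pb ∈ projSet Y (g' A) := by rw [hgA]; exact hpb
      have hq1 : p ∈ projSet Y (g' b) := by rw [hgb]; exact hp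
      have := walk_outer hD hYc hYne hC g' hAb hiso' hmid' hp1 hq1
      rw [hgA, hgb] at this
      rw [dist_comm]
      calc dist pb p ≤ max ((b - A) - infDist (g b) Y - infDist (g A) Y) 0 + 8 * D := this
        _ = max ((b - A) - infDist (g A) Y - infDist (g b) Y) 0 + 8 * D := by ring_nf
    -- piece 2 : [b, a] by triangle
    have d2 : dist pb pa ≤ infDist (g b) Y + (a - b) + infDist (g a) Y := by
      have := proj_triangle hpb hpa
      have hd : dist (g b) (g a) = a - b := by
        rw [hiso b hbI a haI, abs_sub_comm, abs_of_nonneg (by linarith)]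
      rw [hd] at this
      exact this
    -- piece 3 : [a, B]
    have d3 : dist pa q ≤
        max ((B - a) - infDist (g a) Y - infDist (g B) Y) 0 + 8 * D := by
      have hiso' : ∀ u ∈ Icc a B, ∀ v ∈ Icc a B, dist (g u) (g v) = |u - v| := by
        intro u hu v hv
        exact hiso u ⟨le_trans haI.1 hu.1, hu.2⟩ v ⟨le_trans haI.1 hv.1, hv.2⟩
      exact walk_outer hD hYc hYne hC g haB hiso' hmidR hpa hq
    -- assemble the four cases
    set x1 := (b - A) - infDist (g A) Y - infDist (g b) Y with hx1def
    set x3 := (B - a) - infDist (g a) Y - infDist (g B) Y with hx3def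
    have htri : dist p q ≤ dist p pb + dist pb pa + dist pa q := dist_triangle4 _ _ _ _
    have H1 : (B - A) - infDist (g A) Y - infDist (g B) Y ≤ Δ := hΔ A B le_rfl hAB le_rfl
    have H2 : (B - b) - infDist (g b) Y - infDist (g B) Y ≤ Δ := hΔ b B hAb hbI.2 le_rfl
    have H3 : (a - A) - infDist (g A) Y - infDist (g a) Y ≤ Δ := hΔ A a le_rfl haI.1 haB
    have H4 : (a - b) - infDist (g b) Y - infDist (g a) Y ≤ Δ := hΔ b a hAb hba haB
    have hFa0 : (0:ℝ) ≤ infDist (g a) Y := infDist_nonneg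
    have hFb0 : (0:ℝ) ≤ infDist (g b) Y := infDist_nonneg
    rcases le_total x1 0 with h1 | h1 <;> rcases le_total x3 0 with h3 | h3
    · rw [max_eq_right h1] at d1; rw [max_eq_right h3] at d3
      linarith
    · rw [max_eq_right h1] at d1; rw [max_eq_left h3] at d3
      linarith
    · rw [max_eq_left h1] at d1; rw [max_eq_right h3] at d3
      linarith
    · rw [max_eq_left h1] at d1; rw [max_eq_left h3] at d3
      linarith

/-- Projections of two points are at controlled distance (coarse Lipschitz, crude form). -/
lemma proj_two_points (u v : X) :
    diam (projSet Y u ∪ projSet Y v) ≤ D + 4 * dist u v := by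
  have hd0 : (0:ℝ) ≤ dist u v := dist_nonneg
  rcases le_or_gt (dist u v) (infDist u Y) with h | h
  · exact (hC u v h).trans (by linarith)
  · apply diam_le_of_forall_dist_le (by linarith)
    have hLip : infDist v Y ≤ infDist u Y + dist v u := infDist_le_infDist_add_dist
    rw [dist_comm] at hLip
    have hu0 : (0:ℝ) ≤ infDist u Y := infDist_nonneg
    rintro p (hp | hp) q (hq | hq)
    · have h1 : dist p u = infDist u Y := by rw [dist_comm]; exact hp.2
      have h2 : dist u q = infDist u Y := hq.2
      calc dist p q ≤ dist p u + dist u q := dist_triangle _ _ _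
        _ ≤ D + 4 * dist u v := by rw [h1, h2]; linarith
    · have := proj_triangle hp hq
      linarith
    · have := proj_triangle hp hq
      rw [dist_comm v u] at this
      linarith
    · have h1 : dist p v = infDist v Y := by rw [dist_comm]; exact hp.2
      have h2 : dist v q = infDist v Y := hq.2
      calc dist p q ≤ dist p v + dist v q := dist_triangle _ _ _
        _ ≤ D + 4 * dist u v := by rw [h1, h2]; linarith

/-- Diameter of the projection of a geodesic. -/
lemma diam_proj_geodesic {x y : X} (γ : GeodesicFrom x y) :
    diam (projSetOn Y γ.set) ≤ diam (projSet Y x ∪ projSet Y y) + 20 * D := by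
  set L := dist x y with hLdef
  have hL0 : (0:ℝ) ≤ L := dist_nonneg
  set Δ := diam (projSet Y x ∪ projSet Y y) with hΔdef
  have hΔ0 : (0:ℝ) ≤ Δ := diam_nonneg
  have hbxy : IsBounded (projSet Y x ∪ projSet Y y) :=
    (projSet_bounded Y x).union (projSet_bounded Y y)
  -- the key Δ-domination property
  have hΔdom : ∀ s t, 0 ≤ s → s ≤ t → t ≤ L →
      (t - s) - infDist (γ.toFun s) Y - infDist (γ.toFun t) Y ≤ Δ := by
    intro s t hs hst htL
    obtain ⟨p0, hp0⟩ := projSet_nonempty hYc hYne x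
    obtain ⟨pL, hpL⟩ := projSet_nonempty hYc hYne y
    have hdiam : dist p0 pL ≤ Δ := dist_le_diam_of_mem hbxy (Or.inl hp0) (Or.inr hpL)
    have h4 : dist x y ≤ dist x p0 + dist p0 pL + dist pL y := dist_triangle4 _ _ _ _
    have h1 : dist x p0 = infDist x Y := hp0.2
    have h2 : dist pL y = infDist y Y := by rw [dist_comm]; exact hpL.2
    -- Lipschitz along the geodesic
    have hsI : s ∈ Icc (0:ℝ) L := ⟨hs, le_trans hst htL⟩
    have htI : t ∈ Icc (0:ℝ) L := ⟨le_trans hs hst, htL⟩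
    have h0I : (0:ℝ) ∈ Icc (0:ℝ) L := ⟨le_refl 0, hL0⟩
    have hLI : L ∈ Icc (0:ℝ) L := ⟨hL0, le_refl L⟩
    have hLip1 : infDist x Y ≤ infDist (γ.toFun s) Y + s := by
      have h := infDist_le_infDist_add_dist (x := γ.toFun 0) (y := γ.toFun s) (s := Y)
      rw [γ.isom 0 h0I s hsI, γ.source] at h
      rw [abs_sub_comm, abs_of_nonneg (by linarith)] at h
      linarith
    have hLip2 : infDist y Y ≤ infDist (γ.toFun t) Y + (L - t) := by
      have h := infDist_le_infDist_add_dist (x := γ.toFun L) (y := γ.toFun t) (s := Y)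
      rw [γ.isom L hLI t htI, γ.target] at h
      rw [abs_of_nonneg (by linarith)] at h
      linarith
    linarith
  apply diam_le_of_forall_dist_le (by linarith)
  intro p hp q hq
  rw [projSetOn] at hp hq
  rcases mem_iUnion₂.mp hp with ⟨w, hw, hp'⟩
  rcases mem_iUnion₂.mp hq with ⟨w', hw', hq'⟩
  rcases hw with ⟨r, hr, rfl⟩
  rcases hw' with ⟨r', hr', rfl⟩
  have key : ∀ r₁ r₂ : ℝ, r₁ ∈ Icc (0:ℝ) L → r₂ ∈ Icc (0:ℝ) L → r₁ ≤ r₂ →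
      ∀ p₁ q₁ : X, p₁ ∈ projSet Y (γ.toFun r₁) → q₁ ∈ projSet Y (γ.toFun r₂) →
      dist p₁ q₁ ≤ Δ + 20 * D := by
    intro r₁ r₂ h₁ h₂ h12 p₁ q₁ hp₁ hq₁
    apply geodesic_proj_bound hD hYc hYne hC γ.toFun h12 ?_ hΔ0 ?_ hp₁ hq₁
    · intro u hu v hv
      exact γ.isom u ⟨le_trans h₁.1 hu.1, le_trans hu.2 h₂.2⟩ v
        ⟨le_trans h₁.1 hv.1, le_trans hv.2 h₂.2⟩
    · intro s t hs hst htr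
      exact hΔdom s t (le_trans h₁.1 hs) hst (le_trans htr h₂.2)
  rcases le_total r r' with hrr | hrr
  · exact key r r' hr hr' hrr p q hp' hq'
  · rw [dist_comm]
    exact key r' r hr' hr hrr q p hq' hp'

end Walk

section Assemble

variable {Y : Set X} {D : ℝ} (hD : 0 < D) (hYc : IsClosed Y) (hYne : Y.Nonempty)
  (hC : IsContracting D Y)

include hD hYc hYne hC

lemma side (x y z : X) (γ1 : GeodesicFrom x y) (γ2 : GeodesicFrom x z) :
    diam (projSetOn Y γ1.set) ≤ diam (projSetOn Y γ2.set) + 21 * D + 4 * dist y z := by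
  have step1 := diam_proj_geodesic hD hYc hYne hC γ1
  -- boundedness of P2
  have hbP2 : IsBounded (projSetOn Y γ2.set) := by
    apply (isBounded_closedBall (x := x) (r := infDist x Y + 2 * dist x z)).subset
    intro u hu
    rw [projSetOn] at hu
    rcases mem_iUnion₂.mp hu with ⟨w, hw, hu'⟩
    rcases hw with ⟨r, hr, rfl⟩
    have hL0 : (0:ℝ) ≤ dist x z := dist_nonneg
    have hdr : dist (γ2.toFun r) x = r := by
      have h := γ2.isom r hr 0 ⟨le_refl 0, hL0⟩
      rw [γ2.source] at h
      rw [h, abs_of_nonneg (by linarith [hr.1])]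
      simp
    have h1 : dist u (γ2.toFun r) = infDist (γ2.toFun r) Y := by
      rw [dist_comm]; exact hu'.2
    have h2 : infDist (γ2.toFun r) Y ≤ infDist x Y + r := by
      have h := infDist_le_infDist_add_dist (x := γ2.toFun r) (y := x) (s := Y)
      rw [hdr] at h
      exact h
    have : dist u x ≤ dist u (γ2.toFun r) + dist (γ2.toFun r) x := dist_triangle _ _ _
    rw [mem_closedBall]
    rw [h1, hdr] at this
    have hrL : r ≤ dist x z := hr.2
    linarith
  -- projSet x ∪ projSet z ⊆ P2
  have hsub : projSet Y x ∪ projSet Y z ⊆ projSetOn Y γ2.set := by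
    rintro u (hu | hu)
    · rw [projSetOn]
      apply mem_iUnion₂.mpr
      refine ⟨x, ⟨0, ⟨le_refl 0, dist_nonneg⟩, γ2.source⟩, hu⟩
    · rw [projSetOn]
      apply mem_iUnion₂.mpr
      refine ⟨z, ⟨dist x z, ⟨dist_nonneg, le_refl _⟩, γ2.target⟩, hu⟩
  have step3 : diam (projSet Y x ∪ projSet Y z) ≤ diam (projSetOn Y γ2.set) :=
    diam_mono hsub hbP2
  -- bridging: Δ1 ≤ Δ2 + diam(πy ∪ πz)
  have hyz : diam (projSet Y y ∪ projSet Y z) ≤ D + 4 * dist y z :=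
    proj_two_points hD hYc hYne hC y z
  have hbxz : IsBounded (projSet Y x ∪ projSet Y z) :=
    (projSet_bounded Y x).union (projSet_bounded Y z)
  have hbyz : IsBounded (projSet Y y ∪ projSet Y z) :=
    (projSet_bounded Y y).union (projSet_bounded Y z)
  have hΔ2 : (0:ℝ) ≤ diam (projSet Y x ∪ projSet Y z) := diam_nonneg
  have hΔyz : (0:ℝ) ≤ diam (projSet Y y ∪ projSet Y z) := diam_nonneg
  have step2 : diam (projSet Y x ∪ projSet Y y) ≤
      diam (projSet Y x ∪ projSet Y z) + diam (projSet Y y ∪ projSet Y z) := by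
    apply diam_le_of_forall_dist_le (by linarith)
    obtain ⟨c, hc⟩ := projSet_nonempty hYc hYne z
    rintro p (hp | hp) q (hq | hq)
    · have := dist_le_diam_of_mem hbxz (Or.inl hp) (Or.inl hq)
      linarith
    · have h1 := dist_le_diam_of_mem hbxz (Or.inl hp) (Or.inr hc)
      have h2 := dist_le_diam_of_mem hbyz (Or.inr hc) (Or.inl hq)
      calc dist p q ≤ dist p c + dist c q := dist_triangle _ _ _
        _ ≤ _ := by linarith
    · have h1 := dist_le_diam_of_mem hbyz (Or.inl hp) (Or.inr hc)
      have h2 := dist_le_diam_of_mem hbxz (Or.inr hc) (Or.inl hq)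
      calc dist p q ≤ dist p c + dist c q := dist_triangle _ _ _
        _ ≤ _ := by linarith
    · have := dist_le_diam_of_mem hbyz (Or.inl hp) (Or.inl hq)
      linarith
  have hd0 : (0:ℝ) ≤ dist y z := dist_nonneg
  linarith

end Assemble

end Stmt3Aux

/-- if `d(y,z) < M` and `Y` is `D`-contracting, then the diameters of the
projections to `Y` of geodesics `[x,y]` and `[x,z]` differ by less than a constant
`M̃ = M̃(D,M)`. -/
theorem stmt3 (D M : ℝ) (hD : 0 < D) (hM : 0 < M) :
    ∃ Mt : ℝ, 0 < Mt ∧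
      ∀ (X : Type) [MetricSpace X] [ProperSpace X], ∀ Y : Set X,
        IsClosed Y → Y.Nonempty → IsContracting D Y →
        ∀ x y z : X, dist y z < M →
        ∀ (γ1 : GeodesicFrom x y) (γ2 : GeodesicFrom x z),
          |Metric.diam (projSetOn Y γ1.set) - Metric.diam (projSetOn Y γ2.set)| < Mt := by
  refine ⟨21 * D + 4 * M + 1, by linarith, ?_⟩
  intro X _ _ Y hYc hYne hC x y z hyz γ1 γ2
  have h1 := Stmt3Aux.side hD hYc hYne hC x y z γ1 γ2
  have h2 := Stmt3Aux.side hD hYc hYne hC x z y γ2 γ1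
  rw [dist_comm z y] at h2
  rw [abs_sub_lt_iff]
  constructor <;> linarith
end

section
/- Let γ be a geodesic from its endpoint a to b, subdivided by points x_i = γ(2Mi) for 0 ≤ i ≤ k with k = ⌊l/(2M)⌋ − 1 where l = d(a,b) > 8M. If fewer than half of the points x_1,…,x_k lie in the M-neighborhood of an orbit Go, then the connected components of γ ∖ N_{M/2}(Go) of length at least M have total length at least Mk/2, which exceeds l/8. -/
open Metric MeasureTheory Set
open scoped Finset

lemma add_one_mul_le_and_lt_add_two_mul_of_eq_floor_sub_one {l c : ℝ} (hc : 0 < c) {k : ℕ}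
    (hk : (k : ℤ) = ⌊l / c⌋ - 1) : (k + 1) * c ≤ l ∧ l < (k + 2) * c := by
  have hkr : (k : ℝ) + 1 = ⌊l / c⌋ := by exact_mod_cast (eq_sub_iff_add_eq.mp hk)
  constructor
  · rw [← le_div_iff₀ hc, hkr]
    exact Int.floor_le _
  · rw [← div_lt_iff₀ hc, show (k : ℝ) + 2 = ⌊l / c⌋ + 1 by linarith]
    exact Int.lt_floor_add_one _

lemma lt_card_filter_not_of_ncard_lt {p : ℕ → Prop} [DecidablePred p] {k : ℕ}
    (h : ({i : ℕ | 1 ≤ i ∧ i ≤ k ∧ p i}.ncard : ℝ) < k / 2) :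
    (k : ℝ) / 2 < #{i ∈ Finset.Icc 1 k | ¬ p i} := by
  have hset : {i : ℕ | 1 ≤ i ∧ i ≤ k ∧ p i} = ↑({i ∈ Finset.Icc 1 k | p i}) := by
    ext i
    simp [and_assoc]
  have hcard : (#{i ∈ Finset.Icc 1 k | p i} : ℝ) + #{i ∈ Finset.Icc 1 k | ¬ p i} = k := by
    rw [← Nat.cast_add, Finset.card_filter_add_card_filter_not, Nat.card_Icc, Nat.add_sub_cancel]
  rw [hset, Set.ncard_coe_finset] at h
  linarith

lemma closedBall_subset_of_notMem_thickening {X : Type*} [PseudoMetricSpace X] {f : ℝ → X}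
    {l : ℝ} (hf : ∀ s ∈ Icc 0 l, ∀ t ∈ Icc 0 l, dist (f s) (f t) = |s - t|)
    {E : Set X} {t r : ℝ} (ht : closedBall t r ⊆ Icc 0 l)
    (hft : f t ∉ thickening (r + r) E) :
    closedBall t r ⊆ {u | u ∈ Icc 0 l ∧ f u ∉ thickening r E} := by
  intro u hu
  refine ⟨ht hu, fun hfu => hft ?_⟩
  have hr : 0 ≤ r := nonempty_closedBall.mp ⟨u, hu⟩
  have htu : dist (f t) (f u) ≤ r := by
    rw [hf t (ht (mem_closedBall_self hr)) u (ht hu), ← Real.dist_eq, dist_comm]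
    exact hu
  obtain ⟨y, hy, hfuy⟩ := mem_thickening_iff.mp hfu
  exact mem_thickening_iff.mpr
    ⟨y, hy, (dist_triangle _ _ _).trans_lt (add_lt_add_of_le_of_lt htu hfuy)⟩

lemma diam_le_diam_connectedComponentIn {X : Type*} [PseudoMetricSpace X] {S I : Set X}
    (hS : Bornology.IsBounded S) (hI : IsPreconnected I) (hIS : I ⊆ S) {u : X} (hu : u ∈ I) :
    diam I ≤ diam (connectedComponentIn S u) :=
  diam_mono (hI.subset_connectedComponentIn hu hIS) (hS.subset (connectedComponentIn_subset _ _))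

lemma closedBall_subset_setOf_le_diam_connectedComponentIn {S : Set ℝ}
    (hS : Bornology.IsBounded S) {t r : ℝ} (htr : closedBall t r ⊆ S) :
    closedBall t r ⊆ {s | s ∈ S ∧ 2 * r ≤ diam (connectedComponentIn S s)} := by
  intro u hu
  refine ⟨htr hu, ?_⟩
  have hr : 0 ≤ r := nonempty_closedBall.mp ⟨u, hu⟩
  calc 2 * r = diam (closedBall t r) := by
        rw [Real.closedBall_eq_Icc, Real.diam_Icc (by linarith)]
        ring
    _ ≤ diam (connectedComponentIn S u) :=
        diam_le_diam_connectedComponentIn hS (convex_closedBall t r).isPreconnected htr hu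

lemma card_mul_le_measureReal_of_closedBall_subset {T : Set ℝ} (hT : volume T ≠ ⊤)
    {s : Finset ℕ} {a r : ℝ} (hr : 0 ≤ r) (hra : r + r < a)
    (hsub : ∀ i ∈ s, closedBall (a * i) r ⊆ T) :
    #s * (2 * r) ≤ volume.real T := by
  have hdisj : (s : Set ℕ).PairwiseDisjoint fun i => closedBall (a * i) r := by
    intro i _ j _ hij
    apply closedBall_disjoint_closedBall
    have hij' : (1 : ℝ) ≤ |(i : ℝ) - j| := by
      rcases hij.lt_or_gt with h | h
      · have : (i : ℝ) + 1 ≤ j := by exact_mod_cast h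
        exact le_abs.mpr (Or.inr (by linarith))
      · have : (j : ℝ) + 1 ≤ i := by exact_mod_cast h
        exact le_abs.mpr (Or.inl (by linarith))
    rw [Real.dist_eq, ← mul_sub, abs_mul, abs_of_pos (by linarith : 0 < a)]
    nlinarith
  calc (#s : ℝ) * (2 * r) = ∑ i ∈ s, volume.real (closedBall (a * i) r) := by
        simp [Real.volume_real_closedBall hr]
    _ = volume.real (⋃ i ∈ s, closedBall (a * i) r) :=
        (measureReal_biUnion_finset hdisj (fun _ _ => measurableSet_closedBall)
          (fun _ _ => measure_closedBall_lt_top.ne)).symm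
    _ ≤ volume.real T := measureReal_mono (iUnion₂_subset hsub) hT

theorem stmt13_general {G X : Type} [Group G] [MetricSpace X] [MulAction G X]
    (o a b : X) (M : ℝ) (hM : 0 < M) (γ : GeodesicFrom a b)
    (hl : 8 * M < dist a b) (k : ℕ) (hk : (k : ℤ) = ⌊dist a b / (2 * M)⌋ - 1)
    (hfew : (({i : ℕ | 1 ≤ i ∧ i ≤ k ∧
        γ.toFun (2 * M * i) ∈ Metric.thickening M (MulAction.orbit G o)}.ncard : ℝ))
      < (k : ℝ) / 2) :
    M * k / 2 ≤
      (MeasureTheory.volume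
        {s : ℝ |
          (s ∈ Set.Icc 0 (dist a b) ∧
            γ.toFun s ∉ Metric.thickening (M / 2) (MulAction.orbit G o)) ∧
          M ≤ Metric.diam (connectedComponentIn
            {u : ℝ | u ∈ Set.Icc 0 (dist a b) ∧
              γ.toFun u ∉ Metric.thickening (M / 2) (MulAction.orbit G o)} s)}).toReal ∧
    dist a b / 8 < M * k / 2 := by
  classical
  set S := {u : ℝ | u ∈ Icc 0 (dist a b) ∧
    γ.toFun u ∉ thickening (M / 2) (MulAction.orbit G o)}
  obtain ⟨hkl, hlk⟩ := add_one_mul_le_and_lt_add_two_mul_of_eq_floor_sub_one (by positivity) hk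
  refine ⟨?_, by nlinarith⟩
  have hS : Bornology.IsBounded S := isBounded_Icc 0 (dist a b) |>.subset fun u hu => hu.1
  have hT : volume {s | s ∈ S ∧ M ≤ diam (connectedComponentIn S s)} ≠ ⊤ :=
    (hS.subset fun s hs => hs.1).measure_lt_top.ne
  have hball : ∀ i : ℕ, i ∈ Finset.Icc 1 k →
      γ.toFun (2 * M * i) ∉ thickening M (MulAction.orbit G o) →
      closedBall (2 * M * i) (M / 2) ⊆ {s | s ∈ S ∧ M ≤ diam (connectedComponentIn S s)} := by
    intro i hi hfar
    obtain ⟨hi1, hik⟩ := Finset.mem_Icc.mp hi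
    have hi1 : (1 : ℝ) ≤ i := by exact_mod_cast hi1
    have hik : (i : ℝ) ≤ k := by exact_mod_cast hik
    have hsub : closedBall (2 * M * i) (M / 2) ⊆ Icc 0 (dist a b) := by
      rw [Real.closedBall_eq_Icc]
      exact Icc_subset_Icc (by nlinarith) (by nlinarith)
    simpa only [mul_div_cancel₀ M two_ne_zero] using
      closedBall_subset_setOf_le_diam_connectedComponentIn hS
        (closedBall_subset_of_notMem_thickening γ.isom hsub (by rwa [add_halves]))
  have hgood := lt_card_filter_not_of_ncard_lt hfew
  have hmeas := card_mul_le_measureReal_of_closedBall_subset hT (by positivity)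
    (by linarith) fun i hi => hball i (Finset.mem_filter.mp hi).1 (Finset.mem_filter.mp hi).2
  rw [mul_div_cancel₀ M two_ne_zero] at hmeas
  calc M * k / 2 ≤ _ * M := by nlinarith
    _ ≤ _ := hmeas

/-- subdivide a geodesic `γ` from `a` to `b` of length `l > 8M` by points
`x_i = γ(2Mi)`, `1 ≤ i ≤ k = ⌊l/(2M)⌋ − 1`. If fewer than half of the `x_i` lie in the
`M`-neighborhood of the orbit `G·o`, then the union of connected components of
`γ ∖ N_{M/2}(G·o)` of length at least `M` has total length at least `Mk/2 > l/8`. -/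
theorem stmt13 {G X : Type} [Group G] [MetricSpace X] [MulAction G X] [IsIsometricSMul G X]
    (o a b : X) (M : ℝ) (hM : 0 < M) (γ : GeodesicFrom a b)
    (hl : 8 * M < dist a b) (k : ℕ) (hk : (k : ℤ) = ⌊dist a b / (2 * M)⌋ - 1)
    (hfew : (({i : ℕ | 1 ≤ i ∧ i ≤ k ∧
        γ.toFun (2 * M * i) ∈ Metric.thickening M (MulAction.orbit G o)}.ncard : ℝ))
      < (k : ℝ) / 2) :
    M * k / 2 ≤
      (MeasureTheory.volume
        {s : ℝ |
          (s ∈ Set.Icc 0 (dist a b) ∧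
            γ.toFun s ∉ Metric.thickening (M / 2) (MulAction.orbit G o)) ∧
          M ≤ Metric.diam (connectedComponentIn
            {u : ℝ | u ∈ Set.Icc 0 (dist a b) ∧
              γ.toFun u ∉ Metric.thickening (M / 2) (MulAction.orbit G o)} s)}).toReal ∧
    dist a b / 8 < M * k / 2 :=
  stmt13_general o a b M hM γ hl k hk hfew
end

section
/- In the injectivity argument for the insertion map: let F, P be finite subsets of a group G acting on X, suppose R_0 = min{d(o, f p f^{−1} o) : f ∈ F, p ∈ P} > 8r, and let A be a set of shortest H-coset representatives. If a_1, a_1' ∈ A with d(o, a_1'o) ≥ d(o, a_1 o) and there are points on a geodesic [o, a_1'o] within distance 2r of both a_1 o and a_1 f_1 p_1 f_1^{−1} o, where a_1 f_1 p_1 f_1^{−1} a_1^{−1} = h_1 ∈ H ∖ {1}, then d(o, a_1 o) + d(a_1 o, h_1^{−1} a_1' o) ≤ d(o, a_1' o) + 8r − R_0 < d(o, a_1' o); this contradicts minimality of a_1' as a coset representative, since d(o, H a_1' o) = d(o, a_1' o). -/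
namespace GeodesicFrom

variable {X : Type} [MetricSpace X] {x y : X} (γ : GeodesicFrom x y)

theorem dist_source_apply {s : ℝ} (hs : s ∈ Set.Icc 0 (dist x y)) :
    dist x (γ.toFun s) = s := by
  have h := γ.isom 0 ⟨le_rfl, dist_nonneg⟩ s hs
  rw [γ.source, zero_sub, abs_neg, abs_of_nonneg hs.1] at h
  exact h

theorem dist_apply_target {t : ℝ} (ht : t ∈ Set.Icc 0 (dist x y)) :
    dist (γ.toFun t) y = dist x y - t := by
  have h := γ.isom t ht (dist x y) ⟨dist_nonneg, le_rfl⟩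
  rw [γ.target, abs_sub_comm, abs_of_nonneg (sub_nonneg.2 ht.2)] at h
  exact h

theorem dist_apply_apply_of_le {s t : ℝ} (hs : s ∈ Set.Icc 0 (dist x y))
    (ht : t ∈ Set.Icc 0 (dist x y)) (hst : s ≤ t) :
    dist (γ.toFun s) (γ.toFun t) = t - s := by
  rw [γ.isom s hs t ht, abs_sub_comm, abs_of_nonneg (sub_nonneg.2 hst)]

theorem dist_add_dist_le_of_near {p q : X} {s t ε : ℝ} (hs : s ∈ Set.Icc 0 (dist x y))
    (ht : t ∈ Set.Icc 0 (dist x y)) (hst : s ≤ t)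
    (hp : dist (γ.toFun s) p ≤ ε) (hq : dist (γ.toFun t) q ≤ ε) :
    dist x p + dist q y ≤ dist x y - dist p q + 4 * ε := by
  have hxp := dist_triangle x (γ.toFun s) p
  have hqy := dist_triangle_left q y (γ.toFun t)
  have hpq := dist_triangle4 p (γ.toFun s) (γ.toFun t) q
  rw [γ.dist_source_apply hs] at hxp
  rw [γ.dist_apply_target ht] at hqy
  rw [dist_comm p (γ.toFun s), γ.dist_apply_apply_of_le hs ht hst] at hpq
  linarith

end GeodesicFrom

section IsometricAction

variable {G X : Type} [Group G] [MetricSpace X] [MulAction G X] [IsIsometricSMul G X]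

theorem dist_smul_mul_smul (a c : G) (o : X) : dist (a • o) ((a * c) • o) = dist o (c • o) := by
  rw [mul_smul, dist_smul]

-- `a * c * a⁻¹` carries `a • o` to `(a * c) • o`.
theorem dist_smul_conj_inv_mul_smul (a c b : G) (o : X) :
    dist (a • o) (((a * c * a⁻¹)⁻¹ * b) • o) = dist ((a * c) • o) (b • o) := by
  rw [← dist_smul (a * c * a⁻¹), ← mul_smul, ← mul_smul, mul_inv_cancel_left,
    inv_mul_cancel_right]

end IsometricAction

theorem stmt18_general {G X : Type} [Group G] [MetricSpace X] [MulAction G X] [IsIsometricSMul G X]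
    (o : X) (H : Subgroup G) (r R0 : ℝ) (hR0 : 8 * r < R0)
    (a1 a1' f1 p1 : G)
    (hR0le : R0 ≤ dist o ((f1 * p1 * f1⁻¹) • o))
    (hmem : a1 * f1 * p1 * f1⁻¹ * a1⁻¹ ∈ H)
    (γ : GeodesicFrom o (a1' • o)) (s t : ℝ)
    (hs : s ∈ Set.Icc 0 (dist o (a1' • o))) (ht : t ∈ Set.Icc 0 (dist o (a1' • o)))
    (hst : s ≤ t)
    (hclose1 : dist (γ.toFun s) (a1 • o) ≤ 2 * r)
    (hclose2 : dist (γ.toFun t) ((a1 * f1 * p1 * f1⁻¹) • o) ≤ 2 * r)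
    (hmin : ∀ h ∈ H, dist o (a1' • o) ≤ dist o ((h * a1') • o)) :
    (dist o (a1 • o) +
        dist (a1 • o) (((a1 * f1 * p1 * f1⁻¹ * a1⁻¹)⁻¹ * a1') • o) ≤
      dist o (a1' • o) + 8 * r - R0) ∧ False := by
  set c := f1 * p1 * f1⁻¹
  have hc : a1 * f1 * p1 * f1⁻¹ = a1 * c := by simp only [c, mul_assoc]
  rw [hc] at hmem hclose2 ⊢
  have hfellow := γ.dist_add_dist_le_of_near hs ht hst hclose1 hclose2
  rw [dist_smul_mul_smul] at hfellow
  have hshort : dist o (a1 • o) + dist (a1 • o) (((a1 * c * a1⁻¹)⁻¹ * a1') • o) ≤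
      dist o (a1' • o) + 8 * r - R0 := by
    rw [dist_smul_conj_inv_mul_smul]
    linarith
  refine ⟨hshort, ?_⟩
  have hcoset := hmin _ (inv_mem hmem)
  have htri := dist_triangle o (a1 • o) (((a1 * c * a1⁻¹)⁻¹ * a1') • o)
  linarith

/-- injectivity argument via fellow travelling. Suppose
`R₀ ≤ d(o, f₁p₁f₁⁻¹ o)`, `8r < R₀`, `h₁ = a₁f₁p₁f₁⁻¹a₁⁻¹ ∈ H`, `d(o,a₁o) ≤ d(o,a₁'o)`,
and a geodesic `[o, a₁'o]` passes (in order) within `2r` of both `a₁o` and `a₁f₁p₁f₁⁻¹o`.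
Then `d(o,a₁o) + d(a₁o, h₁⁻¹a₁'o) ≤ d(o,a₁'o) + 8r − R₀ < d(o,a₁'o)`, contradicting the
minimality of `a₁'` in its coset `Ha₁'`. -/
theorem stmt18 {G X : Type} [Group G] [MetricSpace X] [MulAction G X] [IsIsometricSMul G X]
    (o : X) (H : Subgroup G) (r R0 : ℝ) (hr : 0 ≤ r) (hR0 : 8 * r < R0)
    (a1 a1' f1 p1 : G)
    (hR0le : R0 ≤ dist o ((f1 * p1 * f1⁻¹) • o))
    (hmem : a1 * f1 * p1 * f1⁻¹ * a1⁻¹ ∈ H)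
    (hne : a1 * f1 * p1 * f1⁻¹ * a1⁻¹ ≠ 1)
    (hord : dist o (a1 • o) ≤ dist o (a1' • o))
    (γ : GeodesicFrom o (a1' • o)) (s t : ℝ)
    (hs : s ∈ Set.Icc 0 (dist o (a1' • o))) (ht : t ∈ Set.Icc 0 (dist o (a1' • o)))
    (hst : s ≤ t)
    (hclose1 : dist (γ.toFun s) (a1 • o) ≤ 2 * r)
    (hclose2 : dist (γ.toFun t) ((a1 * f1 * p1 * f1⁻¹) • o) ≤ 2 * r)
    (hmin : ∀ h ∈ H, dist o (a1' • o) ≤ dist o ((h * a1') • o)) :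
    (dist o (a1 • o) +
        dist (a1 • o) (((a1 * f1 * p1 * f1⁻¹ * a1⁻¹)⁻¹ * a1') • o) ≤
      dist o (a1' • o) + 8 * r - R0) ∧ False :=
  stmt18_general o H r R0 hR0 a1 a1' f1 p1 hR0le hmem γ s t hs ht hst hclose1 hclose2 hmin
end

section
/- For a D-contracting subset U of a geodesic metric space X and any geodesic γ with d(γ, U) ≥ C (for the constant C associated to U), the diameter of the projection π_U(γ) is at most C; consequently, if two geodesics γ, γ' both stay at distance ≥ C from U and share an endpoint whose projection is within distance C of the other's, the total projection diam(π_U(γ ∪ γ')) ≤ 2C + D. -/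
namespace Stmt19Aux

open Metric Set

variable {X : Type} [MetricSpace X] [ProperSpace X]

lemma projSet_nonempty {U : Set X} (hUc : IsClosed U) (hUne : U.Nonempty) (x : X) :
    (projSet U x).Nonempty := by
  obtain ⟨y, hy, hdy⟩ := hUc.exists_infDist_eq_dist hUne x
  exact ⟨y, hy, hdy.symm⟩

lemma projSet_isBounded (U : Set X) (x : X) : Bornology.IsBounded (projSet U x) := by
  apply (Metric.isBounded_closedBall (x := x) (r := Metric.infDist x U)).subset
  rintro p ⟨_, hp⟩
  simpa [Metric.mem_closedBall, dist_comm] using hp.le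

/-- Key consequence of contraction: if `b` lies in the ball of radius `d(a,U)` around `a`,
then any projection of `a` and any projection of `b` are `D`-close. -/
lemma dist_proj_le {D : ℝ} {U : Set X} (hU : IsContracting D U) {a b : X}
    (h : dist a b ≤ Metric.infDist a U) {p q : X}
    (hp : p ∈ projSet U a) (hq : q ∈ projSet U b) :
    dist p q ≤ D :=
  (Metric.dist_le_diam_of_mem ((projSet_isBounded U a).union (projSet_isBounded U b))
    (Or.inl hp) (Or.inr hq)).trans (hU a b h)

/-- The chain of points along a geodesic, moving by the distance to `U` each step. -/
noncomputable def chain (r : ℝ → ℝ) : ℕ → ℝ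
  | 0 => 0
  | n + 1 => chain r n + r (chain r n)

/-- One-sided bounded projection lemma: if a geodesic segment starts at its closest
point to `U` and that distance is at least `12 D`, then every projection of every
point is within `6 D` of every projection of the starting point. -/
lemma one_sided {D : ℝ} (hD : 0 < D) {U : Set X} (hUc : IsClosed U) (hUne : U.Nonempty)
    (hU : IsContracting D U) (f : ℝ → X) (M : ℝ)
    (hiso : ∀ s ∈ Set.Icc (0:ℝ) M, ∀ t ∈ Set.Icc (0:ℝ) M, dist (f s) (f t) = |s - t|)
    (hmin : ∀ t ∈ Set.Icc (0:ℝ) M, Metric.infDist (f 0) U ≤ Metric.infDist (f t) U)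
    (hfar : 12 * D ≤ Metric.infDist (f 0) U) :
    ∀ t ∈ Set.Icc (0:ℝ) M, ∀ p ∈ projSet U (f 0), ∀ q ∈ projSet U (f t),
      dist p q ≤ 6 * D := by
  intro t ht p hp q hq
  have hM : (0:ℝ) ≤ M := le_trans ht.1 ht.2
  set r : ℝ → ℝ := fun s => Metric.infDist (f s) U with hrdef
  set μ : ℝ := Metric.infDist (f 0) U with hμdef
  have hμpos : 0 < μ := lt_of_lt_of_le (by positivity) hfar
  set u : ℕ → ℝ := chain r with hudef
  have hru : ∀ s, 0 ≤ r s := fun s => Metric.infDist_nonneg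
  have hu0 : u 0 = 0 := rfl
  have huS : ∀ n, u (n+1) = u n + r (u n) := fun n => rfl
  have humono : ∀ n, u n ≤ u (n+1) := fun n => by
    rw [huS]; linarith [hru (u n)]
  have humono' : Monotone u := monotone_nat_of_le_succ humono
  have hunn : ∀ n, 0 ≤ u n := by
    intro n
    induction n with
    | zero => exact le_of_eq hu0.symm
    | succ n ih => rw [huS]; linarith [hru (u n)]
  have hmem : ∀ n, u n ≤ M → u n ∈ Set.Icc (0:ℝ) M := fun n h => ⟨hunn n, h⟩
  have hstep : ∀ n, u n ≤ M → μ ≤ r (u n) := fun n h => hmin _ (hmem n h)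
  have hgrow : ∀ n, u n ≤ M → (n : ℝ) * μ ≤ u n := by
    intro n
    induction n with
    | zero => intro _; simp [hu0]
    | succ n ih =>
      intro h
      have hn : u n ≤ M := le_trans (humono n) h
      have h1 := ih hn
      have h2 := hstep n hn
      rw [huS]
      push_cast
      linarith
  -- the step from u n to u (n+1) moves projections by at most D
  have hop_succ : ∀ n, u (n+1) ≤ M → ∀ pa ∈ projSet U (f (u n)), ∀ pb ∈ projSet U (f (u (n+1))),
      dist pa pb ≤ D := by
    intro n h pa hpa pb hpb
    have hn : u n ≤ M := le_trans (humono n) h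
    apply dist_proj_le hU ?_ hpa hpb
    rw [hiso _ (hmem n hn) _ (hmem (n+1) h)]
    have : u n - u (n+1) = -(r (u n)) := by rw [huS]; ring
    rw [this, abs_neg, abs_of_nonneg (hru _)]
  -- linear bound on projection distance along the chain
  have hQlin : ∀ n, u n ≤ M → ∀ p' ∈ projSet U (f 0), ∀ q' ∈ projSet U (f (u n)),
      dist p' q' ≤ ((n : ℝ) + 1) * D := by
    intro n
    induction n with
    | zero =>
      intro _ p' hp' q' hq'
      have : dist p' q' ≤ D := by
        apply dist_proj_le hU ?_ hp' (by rw [hu0] at hq'; exact hq')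
        simp [Metric.infDist_nonneg]
      norm_num
      linarith
    | succ n ih =>
      intro h p' hp' q' hq'
      have hn : u n ≤ M := le_trans (humono n) h
      obtain ⟨qn, hqn⟩ := projSet_nonempty hUc hUne (f (u n))
      have h1 := ih hn p' hp' qn hqn
      have h2 := hop_succ n h qn hqn q' hq'
      have h3 := dist_triangle p' qn q'
      push_cast
      linarith
  -- the main claim: projections along the chain stay within 5D of π(f 0)
  have hQ : ∀ n, u n ≤ M → ∀ p' ∈ projSet U (f 0), ∀ q' ∈ projSet U (f (u n)),
      dist p' q' ≤ 5 * D := by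
    intro n
    induction n with
    | zero =>
      intro _ p' hp' q' hq'
      have : dist p' q' ≤ D := by
        apply dist_proj_le hU ?_ hp' (by rw [hu0] at hq'; exact hq')
        simp [Metric.infDist_nonneg]
      linarith
    | succ n ih =>
      intro h p' hp' q' hq'
      have hn : u n ≤ M := le_trans (humono n) h
      obtain ⟨qn, hqn⟩ := projSet_nonempty hUc hUne (f (u n))
      have h6 : dist p' q' ≤ 6 * D := by
        have h1 := ih hn p' hp' qn hqn
        have h2 := hop_succ n h qn hqn q' hq'
        have h3 := dist_triangle p' qn q'
        linarith
      by_cases hsmall : n + 2 ≤ 5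
      · have h1 := hQlin (n+1) h p' hp' q' hq'
        have h2 : ((n:ℝ) + 2) ≤ 5 := by exact_mod_cast hsmall
        have h3 : (((n:ℕ) + 1 : ℕ) : ℝ) + 1 = (n:ℝ) + 2 := by push_cast; ring
        rw [h3] at h1
        nlinarith
      · push_neg at hsmall
        have hn5 : (5:ℝ) ≤ ((n:ℝ) + 1) := by
          have : 5 ≤ n + 1 := by omega
          exact_mod_cast this
        have hτ5 : 5 * μ ≤ u (n+1) := by
          have h1 := hgrow (n+1) h
          push_cast at h1
          nlinarith
        have hicc1 : u (n+1) ∈ Set.Icc (0:ℝ) M := hmem _ h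
        have hd0 : dist (f 0) (f (u (n+1))) = u (n+1) := by
          rw [hiso 0 ⟨le_refl 0, hM⟩ _ hicc1, zero_sub, abs_neg, abs_of_nonneg (hunn _)]
        have hdp : dist (f 0) p' = μ := hp'.2
        have hdq : dist (f (u (n+1))) q' = r (u (n+1)) := hq'.2
        have hF3 : u (n+1) ≤ μ + 6 * D + r (u (n+1)) := by
          have tri := dist_triangle4 (f 0) p' q' (f (u (n+1)))
          rw [hd0, hdp, dist_comm q' (f (u (n+1))), hdq] at tri
          linarith
        set v : ℝ := μ + 6 * D with hvdef
        have hvle : v ≤ u (n+1) := by linarith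
        have hvmem : v ∈ Set.Icc (0:ℝ) M := ⟨by positivity, le_trans hvle h⟩
        obtain ⟨qv, hqv⟩ := projSet_nonempty hUc hUne (f v)
        have hopbig : dist q' qv ≤ D := by
          apply dist_proj_le hU ?_ hq' hqv
          rw [hiso _ hicc1 _ hvmem, abs_of_nonneg (by linarith)]
          linarith
        have hu1 : u 1 = μ := by
          rw [huS 0, hu0]; simp [hrdef, hμdef]
        have hu1M : u 1 ≤ M := by
          rw [hu1]; linarith
        have hu1mem : u 1 ∈ Set.Icc (0:ℝ) M := hmem 1 hu1M
        obtain ⟨q1, hq1⟩ := projSet_nonempty hUc hUne (f (u 1))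
        have hop1 : dist p' q1 ≤ D := by
          apply dist_proj_le hU ?_ hp' hq1
          rw [hiso 0 ⟨le_refl 0, hM⟩ _ hu1mem, hu1, zero_sub, abs_neg,
            abs_of_nonneg hμpos.le]
        have hop2 : dist q1 qv ≤ D := by
          apply dist_proj_le hU ?_ hq1 hqv
          rw [hiso _ hu1mem _ hvmem, hu1]
          have habs : |μ - v| = 6 * D := by
            rw [hvdef]
            have : μ - (μ + 6 * D) = -(6 * D) := by ring
            rw [this, abs_neg, abs_of_nonneg (by linarith)]
          rw [habs]
          have := hstep 1 hu1M
          rw [hu1] at this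
          linarith
        have := dist_triangle p' q1 qv
        have := dist_triangle p' qv q'
        rw [dist_comm qv q'] at this
        linarith
  -- find the chain interval containing t
  have hex : ∃ m, t < u m := by
    refine ⟨⌈t/μ⌉₊ + 1, ?_⟩
    by_contra hcon
    push_neg at hcon
    have h1 := hgrow _ (le_trans hcon ht.2)
    have h2 : t/μ ≤ (⌈t/μ⌉₊ : ℝ) := Nat.le_ceil _
    have h3 : t ≤ (⌈t/μ⌉₊ : ℝ) * μ := by
      rw [div_le_iff₀ hμpos] at h2
      linarith
    push_cast at h1
    nlinarith
  have hn₀pos : Nat.find hex ≠ 0 := by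
    intro h0
    have := Nat.find_spec hex
    rw [h0, hu0] at this
    linarith [ht.1]
  obtain ⟨n, hn⟩ := Nat.exists_eq_succ_of_ne_zero hn₀pos
  have htlt : t < u (n+1) := by
    have := Nat.find_spec hex
    rwa [hn] at this
  have hnle : u n ≤ t := le_of_not_gt (Nat.find_min hex (by omega))
  have hnM : u n ≤ M := le_trans hnle ht.2
  obtain ⟨qn, hqn⟩ := projSet_nonempty hUc hUne (f (u n))
  have hQn := hQ n hnM p hp qn hqn
  have hop : dist qn q ≤ D := by
    apply dist_proj_le hU ?_ hqn hq
    rw [hiso _ (hmem n hnM) _ ht, abs_of_nonpos (by linarith)]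
    have : u (n+1) = u n + r (u n) := huS n
    linarith
  have := dist_triangle p qn q
  linarith

/-- Any two points of the projection of a far geodesic are at distance at most `12 D`. -/
lemma pair_bound {D : ℝ} (hD : 0 < D) {U : Set X} (hUc : IsClosed U) (hUne : U.Nonempty)
    (hU : IsContracting D U) (x y : X) (γ : GeodesicFrom x y)
    (hfar : ∀ p ∈ γ.set, 12 * D ≤ Metric.infDist p U) :
    ∀ a ∈ projSetOn U γ.set, ∀ b ∈ projSetOn U γ.set, dist a b ≤ 12 * D := by
  set g : ℝ → X := γ.toFun with hg
  set L : ℝ := dist x y with hL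
  have hL0 : (0:ℝ) ≤ L := dist_nonneg
  -- the distance-to-U function attains a minimum on the geodesic
  have hlipg : LipschitzOnWith 1 g (Set.Icc 0 L) := by
    rw [lipschitzOnWith_iff_dist_le_mul]
    intro s hs t ht
    rw [γ.isom s hs t ht, Real.dist_eq]
    simp
  have hcont : ContinuousOn (fun s => Metric.infDist (g s) U) (Set.Icc (0:ℝ) L) :=
    ((Metric.lipschitz_infDist_pt U).comp_lipschitzOnWith hlipg).continuousOn
  obtain ⟨w, hw, hwmin⟩ := isCompact_Icc.exists_isMinOn
    (⟨0, Set.left_mem_Icc.mpr hL0⟩ : (Set.Icc (0:ℝ) L).Nonempty) hcont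
  have hwmin' : ∀ s ∈ Set.Icc (0:ℝ) L,
      Metric.infDist (g w) U ≤ Metric.infDist (g s) U := fun s hs => hwmin hs
  have hgw : g w ∈ γ.set := ⟨w, hw, rfl⟩
  have hfarw : 12 * D ≤ Metric.infDist (g w) U := hfar _ hgw
  -- every projection point of every point of the geodesic is 6D-close to π(g w)
  have key : ∀ s ∈ Set.Icc (0:ℝ) L, ∀ p ∈ projSet U (g w), ∀ q ∈ projSet U (g s),
      dist p q ≤ 6 * D := by
    intro s hs p hp q hq
    rcases le_total w s with hws | hsw
    · -- use f := fun τ => g (w + τ) on [0, L - w]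
      have happ := one_sided hD hUc hUne hU (fun τ => g (w + τ)) (L - w)
        (fun a ha b hb => by
          have hiso := γ.isom (w + a) ⟨by linarith [ha.1, hw.1], by linarith [ha.2]⟩
            (w + b) ⟨by linarith [hb.1, hw.1], by linarith [hb.2]⟩
          simpa [show w + a - (w + b) = a - b by ring] using hiso)
        (fun τ hτ => by
          simp only [add_zero]
          exact hwmin' (w + τ) ⟨by linarith [hτ.1, hw.1], by linarith [hτ.2]⟩)
        (by simpa using hfarw)
        (s - w) ⟨by linarith, by linarith [hs.2]⟩ p (by simpa using hp)
        q (by simpa [show w + (s - w) = s by ring] using hq)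
      exact happ
    · -- use f := fun τ => g (w - τ) on [0, w]
      have happ := one_sided hD hUc hUne hU (fun τ => g (w - τ)) w
        (fun a ha b hb => by
          have hiso := γ.isom (w - a) ⟨by linarith [ha.2], by linarith [ha.1, hw.2]⟩
            (w - b) ⟨by linarith [hb.2], by linarith [hb.1, hw.2]⟩
          rw [show w - a - (w - b) = -(a - b) by ring, abs_neg] at hiso
          simpa using hiso)
        (fun τ hτ => by
          simp only [sub_zero]
          exact hwmin' (w - τ) ⟨by linarith [hτ.2], by linarith [hτ.1, hw.2]⟩)
        (by simpa using hfarw)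
        (w - s) ⟨by linarith, by linarith [hs.1]⟩ p (by simpa using hp)
        q (by simpa [show w - (w - s) = s by ring] using hq)
      exact happ
  intro a ha b hb
  rw [projSetOn, Set.mem_iUnion₂] at ha hb
  obtain ⟨xa, hxa, ha⟩ := ha
  obtain ⟨xb, hxb, hb⟩ := hb
  obtain ⟨sa, hsa, rfl⟩ := hxa
  obtain ⟨sb, hsb, rfl⟩ := hxb
  obtain ⟨p, hp⟩ := projSet_nonempty hUc hUne (g w)
  have h1 : dist p a ≤ 6 * D := key sa hsa p hp a ha
  have h2 : dist p b ≤ 6 * D := key sb hsb p hp b hb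
  have := dist_triangle a p b
  rw [dist_comm a p] at this
  linarith

end Stmt19Aux

open Stmt19Aux Metric in
/-- for a `D`-contracting set `U` there is a constant `C > 0` such that every
geodesic staying at distance `≥ C` from `U` has projection of diameter `≤ C`; consequently,
two such geodesics sharing an endpoint have total projection of diameter `≤ 2C + D`. -/
theorem stmt19 {X : Type} [MetricSpace X] [ProperSpace X]
    (D : ℝ) (hD : 0 < D) (U : Set X) (hUc : IsClosed U) (hUne : U.Nonempty)
    (hU : IsContracting D U) :
    ∃ C : ℝ, 0 < C ∧
      (∀ (x y : X) (γ : GeodesicFrom x y),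
        (∀ p ∈ γ.set, C ≤ Metric.infDist p U) →
        Metric.diam (projSetOn U γ.set) ≤ C) ∧
      (∀ (x y z : X) (γ1 : GeodesicFrom x y) (γ2 : GeodesicFrom y z),
        (∀ p ∈ γ1.set, C ≤ Metric.infDist p U) →
        (∀ p ∈ γ2.set, C ≤ Metric.infDist p U) →
        Metric.diam (projSetOn U (γ1.set ∪ γ2.set)) ≤ 2 * C + D) := by
  refine ⟨12 * D, by positivity, ?_, ?_⟩
  · intro x y γ hfar
    apply Metric.diam_le_of_forall_dist_le (by positivity)
    intro a ha b hb
    exact pair_bound hD hUc hUne hU x y γ hfar a ha b hb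
  · intro x y z γ1 γ2 h1 h2
    apply Metric.diam_le_of_forall_dist_le (by positivity)
    intro a ha b hb
    have hy1 : y ∈ γ1.set := ⟨dist x y, ⟨dist_nonneg, le_refl _⟩, γ1.target⟩
    have hy2 : y ∈ γ2.set := ⟨0, ⟨le_refl _, dist_nonneg⟩, γ2.source⟩
    obtain ⟨pY, hpY⟩ := projSet_nonempty hUc hUne y
    have hpY1 : pY ∈ projSetOn U γ1.set := by
      rw [projSetOn, Set.mem_iUnion₂]; exact ⟨y, hy1, hpY⟩
    have hpY2 : pY ∈ projSetOn U γ2.set := by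
      rw [projSetOn, Set.mem_iUnion₂]; exact ⟨y, hy2, hpY⟩
    have split : ∀ c, c ∈ projSetOn U (γ1.set ∪ γ2.set) →
        c ∈ projSetOn U γ1.set ∨ c ∈ projSetOn U γ2.set := by
      intro c hc
      rw [projSetOn, Set.mem_iUnion₂] at hc
      obtain ⟨w, hw, hc⟩ := hc
      rcases hw with hw | hw
      · exact Or.inl (by rw [projSetOn, Set.mem_iUnion₂]; exact ⟨w, hw, hc⟩)
      · exact Or.inr (by rw [projSetOn, Set.mem_iUnion₂]; exact ⟨w, hw, hc⟩)
    have bnd1 := pair_bound hD hUc hUne hU x y γ1 h1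
    have bnd2 := pair_bound hD hUc hUne hU y z γ2 h2
    have haY : dist a pY ≤ 12 * D := by
      rcases split a ha with h | h
      · exact bnd1 a h pY hpY1
      · exact bnd2 a h pY hpY2
    have hbY : dist pY b ≤ 12 * D := by
      rcases split b hb with h | h
      · exact bnd1 pY hpY1 b h
      · exact bnd2 pY hpY2 b h
    have := dist_triangle a pY b
    linarith
end
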